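/- arXiv:0901.1745 — 2 statements merged into one kernel-verified Lean document; each statement's English description precedes it below -/
import Mathlib

section
/- Let T be a tree (connected acyclic simple graph) and let φ : T → T be a locally injective graph homomorphism. Then φ is injective. -/
/-!
A homomorphism that is injective on neighbourhoods sends a path to a walk that never backtracks,
and in an acyclic graph a non-backtracking walk is a path. If `φ a = φ b`, the image of a path from
`a` to `b` is therefore a closed path, hence trivial, so `a = b`.
-/

namespace SimpleGraph

variable {V W : Type*} {G : SimpleGraph V} {G' : SimpleGraph W}

def Walk.IsNonbacktracking {u v : V} (p : G.Walk u v) : Prop :=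
  ∀ i, i + 2 ≤ p.length → p.getVert i ≠ p.getVert (i + 2)

lemma Walk.IsNonbacktracking.of_cons {u v w : V} {h : G.Adj u v} {p : G.Walk v w}
    (hp : (p.cons h).IsNonbacktracking) : p.IsNonbacktracking :=
  fun i hi => hp (i + 1) (by simp only [length_cons]; omega)

lemma IsAcyclic.isPath_cons {u v w : V} (hG : G.IsAcyclic) (h : G.Adj u v) {p : G.Walk v w}
    (hp : p.IsPath) (hsnd : p.snd ≠ u) : (p.cons h).IsPath :=
  Walk.cons_isPath_iff h p |>.2 ⟨hp, fun hu => hsnd (hG.eq_snd_of_adj_start hp h.symm hu).symm⟩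

lemma IsAcyclic.isPath_of_isNonbacktracking (hG : G.IsAcyclic) {u v : V} {p : G.Walk u v}
    (hp : p.IsNonbacktracking) : p.IsPath := by
  induction p with
  | nil => exact .nil
  | @cons u v w h q ih =>
    refine hG.isPath_cons h (ih hp.of_cons) ?_
    cases q with
    | nil => exact h.ne'
    | cons => simpa using (hp 0 (by simp)).symm

lemma Walk.IsPath.isNonbacktracking_map {u v : V} {p : G.Walk u v} (hp : p.IsPath) (φ : G →g G')
    (hφ : ∀ x, Set.InjOn φ (G.neighborSet x)) : (p.map φ).IsNonbacktracking := by
  intro i hi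
  rw [length_map] at hi
  simp only [getVert_map]
  refine mt (hφ (p.getVert (i + 1)) (p.adj_getVert_succ (by omega)).symm
    (p.adj_getVert_succ (by omega))) fun h => ?_
  simpa using hp.getVert_injOn (by simp; omega) (by simp; omega) h

lemma IsAcyclic.injective_of_injOn_neighborSet (hG' : G'.IsAcyclic) (hG : G.Connected)
    (φ : G →g G') (hφ : ∀ x, Set.InjOn φ (G.neighborSet x)) : Function.Injective φ := by
  intro a b hab
  obtain ⟨p, hp⟩ := (hG a b).exists_isPath
  have hmap : ((p.map φ).copy rfl hab.symm).IsPath := by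
    rw [Walk.isPath_copy]
    exact hG'.isPath_of_isNonbacktracking (hp.isNonbacktracking_map φ hφ)
  have hnil : p.Nil := by simpa using Walk.isPath_iff_nil.1 hmap
  exact hnil.eq

end SimpleGraph

/-- A locally injective graph homomorphism from a tree to itself is injective. -/
theorem tree_locally_injective_hom_injective {V : Type*} (T : SimpleGraph V) (hT : T.IsTree)
    (φ : T →g T)
    (hloc : ∀ v u w : V, (u = v ∨ T.Adj v u) → (w = v ∨ T.Adj v w) → u ≠ w → φ u ≠ φ w) :
    Function.Injective φ :=
  hT.isAcyclic.injective_of_injOn_neighborSet hT.connected φ fun v _ hu _ hw =>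
    not_imp_not.1 <| hloc v _ _ (.inr hu) (.inr hw)
end

section
/- In the standard Farey graph, any two vertices can be connected by a sequence of 3-cycles such that consecutive 3-cycles share exactly two vertices (an edge). -/
/-!
Call two Farey triangles adjacent when they share an edge; it suffices that this dual graph is
connected. An edge `{a, c}` with `0 < den a < den c` lies in the triangle `{a, c, c - a}`
(vectors in `ℤ²`), which equals or is adjacent to any triangle on the edge `{a, c - a}` of
smaller total denominator. Descending this way ends at an edge `{∞, n}` or `{n, n + 1}`, lying
in the triangle `{∞, n, n + 1}`, and consecutive triangles of this kind share the edge
`{∞, n + 1}`. Every vertex lies on an edge by Bézout.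
-/

abbrev FareyVertex : Type :=
  {v : ℤ × ℤ // Int.gcd v.1 v.2 = 1 ∧ (0 < v.2 ∨ (v.2 = 0 ∧ v.1 = 1))}

def FareyGraph : SimpleGraph FareyVertex where
  Adj u v := |u.1.1 * v.1.2 - v.1.1 * u.1.2| = 1
  symm := by
    constructor
    intro u v h
    beta_reduce at h ⊢
    rw [show v.1.1 * u.1.2 - u.1.1 * v.1.2 = -(u.1.1 * v.1.2 - v.1.1 * u.1.2) by ring,
      abs_neg]
    exact h
  loopless := by
    constructor
    intro u h
    simp at h

/-- A 3-cycle (triangle) in the Farey graph: three mutually adjacent vertices. -/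
def IsFareyTriangle (T : Finset FareyVertex) : Prop :=
  T.card = 3 ∧ ∀ u ∈ T, ∀ v ∈ T, u ≠ v → FareyGraph.Adj u v

open Finset

namespace FareyVertex

def infty : FareyVertex := ⟨(1, 0), by norm_num, Or.inr ⟨rfl, rfl⟩⟩

def ofInt (n : ℤ) : FareyVertex := ⟨(n, 1), by simp, Or.inl one_pos⟩

lemma den_nonneg (x : FareyVertex) : 0 ≤ x.1.2 := by
  rcases x.2.2 with h | ⟨h, -⟩ <;> omega

lemma eq_infty_of_den_eq_zero {x : FareyVertex} (h : x.1.2 = 0) : x = infty :=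
  Subtype.ext (Prod.ext (x.2.2.resolve_left h.not_gt).2 h)

lemma eq_ofInt_of_den_eq_one {x : FareyVertex} (h : x.1.2 = 1) : x = ofInt x.1.1 :=
  Subtype.ext (Prod.ext rfl h)

end FareyVertex

lemma isCoprime_of_abs_sub_mul_eq_one {p q r s : ℤ} (h : |p * s - r * q| = 1) :
    IsCoprime r s := by
  rcases (abs_eq zero_le_one).mp h with h | h
  · exact ⟨-q, p, by linear_combination h⟩
  · exact ⟨q, -p, by linear_combination -h⟩

namespace FareyGraph

open FareyVertex

lemma adj_iff {u v : FareyVertex} :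
    FareyGraph.Adj u v ↔ |u.1.1 * v.1.2 - v.1.1 * u.1.2| = 1 := Iff.rfl

lemma infty_adj_ofInt (n : ℤ) : FareyGraph.Adj infty (ofInt n) := by
  simp [adj_iff, infty, ofInt]

lemma ofInt_adj_ofInt_iff {m n : ℤ} : FareyGraph.Adj (ofInt m) (ofInt n) ↔ |m - n| = 1 := by
  simp [adj_iff, ofInt]

lemma exists_adj (x : FareyVertex) : ∃ y, FareyGraph.Adj x y := by
  rcases (den_nonneg x).eq_or_lt with h0 | hpos
  · exact ⟨ofInt 0, eq_infty_of_den_eq_zero h0.symm ▸ infty_adj_ofInt 0⟩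
  obtain ⟨u, v, huv⟩ := Int.isCoprime_iff_gcd_eq_one.mpr x.2.1
  -- shift the Bézout pair `(u, v)` so that the neighbour gets a positive denominator
  set k := |u| + 1
  have hden : 0 < u + x.1.2 * k := by
    linarith [neg_abs_le u, le_mul_of_one_le_left (by positivity : (0 : ℤ) ≤ k) hpos]
  have hdet : |x.1.1 * (u + x.1.2 * k) - (k * x.1.1 - v) * x.1.2| = 1 := by
    rw [show x.1.1 * (u + x.1.2 * k) - (k * x.1.1 - v) * x.1.2 = 1 by linear_combination huv,
      abs_one]
  exact ⟨⟨(k * x.1.1 - v, u + x.1.2 * k),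
    Int.isCoprime_iff_gcd_eq_one.mp (isCoprime_of_abs_sub_mul_eq_one hdet), Or.inl hden⟩, hdet⟩

lemma den_pos_and_lt_of_adj {a c : FareyVertex} (h : FareyGraph.Adj a c)
    (hle : a.1.2 ≤ c.1.2) (hc : 1 < c.1.2) : 0 < a.1.2 ∧ a.1.2 < c.1.2 := by
  have not_dvd (m : ℤ) (hm : a.1.1 * c.1.2 - c.1.1 * a.1.2 = c.1.2 * m) : False := by
    have hdvd : c.1.2 ∣ |a.1.1 * c.1.2 - c.1.1 * a.1.2| := (dvd_abs _ _).mpr ⟨m, hm⟩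
    have := Int.le_of_dvd one_pos (adj_iff.mp h ▸ hdvd)
    omega
  refine ⟨(den_nonneg a).lt_of_ne fun h0 => not_dvd a.1.1 ?_,
    hle.lt_of_ne fun heq => not_dvd (a.1.1 - c.1.1) ?_⟩
  · rw [← h0]; ring
  · rw [heq]; ring

lemma exists_adj_adj_den_eq_sub {a c : FareyVertex} (h : FareyGraph.Adj a c)
    (hlt : a.1.2 < c.1.2) :
    ∃ d : FareyVertex, FareyGraph.Adj a d ∧ FareyGraph.Adj c d ∧ d.1.2 = c.1.2 - a.1.2 := by
  have hda : |a.1.1 * (c.1.2 - a.1.2) - (c.1.1 - a.1.1) * a.1.2| = 1 := by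
    convert adj_iff.mp h using 2; ring
  have hdc : |c.1.1 * (c.1.2 - a.1.2) - (c.1.1 - a.1.1) * c.1.2| = 1 := by
    convert adj_iff.mp h using 2; ring
  exact ⟨⟨(c.1.1 - a.1.1, c.1.2 - a.1.2),
    Int.isCoprime_iff_gcd_eq_one.mp (isCoprime_of_abs_sub_mul_eq_one hda), Or.inl (by omega)⟩,
    hda, hdc, rfl⟩

end FareyGraph

lemma isFareyTriangle_iff_isNClique {T : Finset FareyVertex} :
    IsFareyTriangle T ↔ FareyGraph.IsNClique 3 T :=
  ⟨fun ⟨hcard, hadj⟩ => ⟨hadj, hcard⟩, fun ⟨hadj, hcard⟩ => ⟨hcard, hadj⟩⟩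

lemma isFareyTriangle_triple {a b c : FareyVertex} (hab : FareyGraph.Adj a b)
    (hac : FareyGraph.Adj a c) (hbc : FareyGraph.Adj b c) : IsFareyTriangle {a, b, c} :=
  isFareyTriangle_iff_isNClique.mpr (SimpleGraph.is3Clique_triple_iff.mpr ⟨hab, hac, hbc⟩)

abbrev FareyTriangle : Type := {T : Finset FareyVertex // IsFareyTriangle T}

def fareyDualGraph : SimpleGraph FareyTriangle where
  Adj S T := #(S.1 ∩ T.1) = 2
  symm := ⟨fun S T h => by rwa [inter_comm]⟩
  loopless := ⟨fun T h => by rw [inter_self, T.2.1] at h; cases h⟩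

namespace FareyTriangle

open FareyVertex FareyGraph

lemma eq_or_adj_of_mem_of_mem {S T : FareyTriangle} {a d : FareyVertex} (had : a ≠ d)
    (haS : a ∈ S.1) (hdS : d ∈ S.1) (haT : a ∈ T.1) (hdT : d ∈ T.1) :
    S = T ∨ fareyDualGraph.Adj S T := by
  have hlow : 2 ≤ #(S.1 ∩ T.1) := by
    rw [← card_pair had]
    exact card_le_card (by simp [insert_subset_iff, *])
  rcases (card_le_card (inter_subset_left (s₁ := S.1) (s₂ := T.1))).eq_or_lt with h3 | h2
  · have hS : S.1 ∩ T.1 = S.1 := eq_of_subset_of_card_le inter_subset_left h3.ge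
    have hT : S.1 ∩ T.1 = T.1 :=
      eq_of_subset_of_card_le inter_subset_right (by rw [h3, S.2.1, T.2.1])
    exact .inl (Subtype.ext (hS.symm.trans hT))
  · rw [S.2.1] at h2
    exact .inr (show #(S.1 ∩ T.1) = 2 by omega)

def ofInt (n : ℤ) : FareyTriangle :=
  ⟨{infty, FareyVertex.ofInt n, FareyVertex.ofInt (n + 1)},
    isFareyTriangle_triple (infty_adj_ofInt n) (infty_adj_ofInt (n + 1))
      (ofInt_adj_ofInt_iff.mpr (by simp))⟩

lemma ofInt_adj_ofInt_add_one (n : ℤ) : fareyDualGraph.Adj (ofInt n) (ofInt (n + 1)) := by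
  refine (eq_or_adj_of_mem_of_mem (a := infty) (d := FareyVertex.ofInt (n + 1))
    (infty_adj_ofInt _).ne (by simp [ofInt]) (by simp [ofInt]) (by simp [ofInt])
    (by simp [ofInt])).resolve_left fun h => ?_
  have : FareyVertex.ofInt n ∈ (ofInt (n + 1)).1 := h ▸ by simp [ofInt]
  simp [ofInt, FareyVertex.ofInt, infty] at this
  omega

lemma reachable_ofInt_zero (n : ℤ) : fareyDualGraph.Reachable (ofInt 0) (ofInt n) := by
  induction n using Int.induction_on with
  | zero => rfl
  | succ n ih => exact ih.trans (ofInt_adj_ofInt_add_one n).reachable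
  | pred n ih =>
    have h := ofInt_adj_ofInt_add_one (-(n : ℤ) - 1)
    rw [sub_add_cancel] at h
    exact ih.trans h.symm.reachable

lemma mem_ofInt {n : ℤ} {x : FareyVertex} : x ∈ (ofInt n).1 ↔
    x = infty ∨ x = FareyVertex.ofInt n ∨ x = FareyVertex.ofInt (n + 1) := by
  simp [ofInt]

lemma exists_mem_ofInt_of_adj {a c : FareyVertex} (h : FareyGraph.Adj a c)
    (hle : a.1.2 ≤ c.1.2) (hc : c.1.2 ≤ 1) :
    ∃ n, a ∈ (ofInt n).1 ∧ c ∈ (ofInt n).1 := by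
  have hc1 : c.1.2 = 1 := by
    by_contra hc1
    have := den_nonneg a
    have ha0 : a.1.2 = 0 := by omega
    have hc0 : c.1.2 = 0 := by omega
    exact h.ne ((eq_infty_of_den_eq_zero ha0).trans (eq_infty_of_den_eq_zero hc0).symm)
  rw [eq_ofInt_of_den_eq_one hc1] at h ⊢
  rcases (den_nonneg a).eq_or_lt with ha0 | ha_pos
  · rw [eq_infty_of_den_eq_zero ha0.symm]
    exact ⟨c.1.1, by simp [mem_ofInt]⟩
  rw [eq_ofInt_of_den_eq_one (show a.1.2 = 1 by omega)] at h ⊢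
  rw [ofInt_adj_ofInt_iff] at h
  rcases (abs_eq zero_le_one).mp h with h | h
  · exact ⟨c.1.1, by simp [mem_ofInt, FareyVertex.ofInt]; omega, by simp [mem_ofInt]⟩
  · exact ⟨a.1.1, by simp [mem_ofInt], by simp [mem_ofInt, FareyVertex.ofInt]; omega⟩

theorem exists_reachable_mem_mem_of_adj {a c : FareyVertex} (h : FareyGraph.Adj a c) :
    ∃ T : FareyTriangle, a ∈ T.1 ∧ c ∈ T.1 ∧ fareyDualGraph.Reachable (ofInt 0) T := by
  induction hn : (a.1.2 + c.1.2).toNat using Nat.strong_induction_on generalizing a c with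
  | _ n ih =>
  wlog hle : a.1.2 ≤ c.1.2 generalizing a c
  · obtain ⟨T, hcT, haT, hT⟩ := this h.symm (by rwa [add_comm]) (by omega)
    exact ⟨T, haT, hcT, hT⟩
  by_cases hc : c.1.2 ≤ 1
  · obtain ⟨m, ham, hcm⟩ := exists_mem_ofInt_of_adj h hle hc
    exact ⟨ofInt m, ham, hcm, reachable_ofInt_zero m⟩
  obtain ⟨ha0, hlt⟩ := den_pos_and_lt_of_adj h hle (by omega)
  obtain ⟨d, had, hcd, hd⟩ := exists_adj_adj_den_eq_sub h hlt
  obtain ⟨T, haT, hdT, hT⟩ := ih _ (by omega) had rfl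
  let S : FareyTriangle := ⟨{a, c, d}, isFareyTriangle_triple h had hcd⟩
  refine ⟨S, by simp [S], by simp [S], ?_⟩
  rcases eq_or_adj_of_mem_of_mem (S := S) had.ne (by simp [S]) (by simp [S]) haT hdT
    with hST | hST
  · exact hST ▸ hT
  · exact hT.trans hST.symm.reachable

theorem exists_reachable_mem (x : FareyVertex) :
    ∃ T : FareyTriangle, x ∈ T.1 ∧ fareyDualGraph.Reachable (ofInt 0) T :=
  let ⟨_, hxy⟩ := exists_adj x
  let ⟨T, hxT, _, hT⟩ := exists_reachable_mem_mem_of_adj hxy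
  ⟨T, hxT, hT⟩

end FareyTriangle

/-- Any two vertices of the standard Farey graph can be connected by a sequence of
3-cycles in which consecutive 3-cycles share exactly two vertices. -/
theorem farey_connected_by_triangles (x y : FareyVertex) :
    ∃ (n : ℕ) (T : Fin (n + 1) → Finset FareyVertex),
      (∀ i, IsFareyTriangle (T i)) ∧ x ∈ T 0 ∧ y ∈ T (Fin.last n) ∧
        ∀ i : Fin n, (T i.castSucc ∩ T i.succ).card = 2 := by
  obtain ⟨S, hxS, hS⟩ := FareyTriangle.exists_reachable_mem x
  obtain ⟨T, hyT, hT⟩ := FareyTriangle.exists_reachable_mem y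
  obtain ⟨p⟩ := hS.symm.trans hT
  refine ⟨p.length, fun i => (p.getVert i).1, fun i => (p.getVert i).2, ?_, ?_, fun i => ?_⟩
  · simpa using hxS
  · simpa using hyT
  · exact p.adj_getVert_succ i.2
end
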